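/- arXiv:2206.05558 — 3 statements merged into one kernel-verified Lean document; each statement's English description precedes it below -/
import Mathlib

section
/- Let S ∈ ℝ^{r×n} be a random matrix satisfying the (ε, δ)-sketch property: for matrices A, B with n rows, Pr[‖AᵀSᵀSB − AᵀB‖ > ε‖A‖_F‖B‖_F] ≤ δ. If S is an (ε/l, δ)-sketch matrix, then for any fixed A ∈ ℝ^{n×l} and all x ∈ ℝˡ simultaneously, with probability at least 1−δ: (1−ε)‖Ax‖² ≤ ‖SAx‖² ≤ (1+ε)‖Ax‖². -/
/-!
Let `U` be a matrix whose `k ≤ l` orthonormal columns span the column space of `A`, so that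
`A = U C`. For `y = C x` we have `‖A x‖² = ‖y‖²` and
`‖S A x‖² - ‖A x‖² = yᵀ (Uᵀ Sᵀ S U - Uᵀ U) y`, whose absolute value is at most
`‖Uᵀ Sᵀ S U - Uᵀ U‖_F ‖y‖²`. Applying the sketch property to the pair `(U, U)`, outside an event
of probability at most `δ` this Frobenius norm is at most `(ε / l) ‖U‖_F² = ε k / l ≤ ε`, and
then the embedding inequalities hold for every `x` at once.
-/

open MeasureTheory Matrix

noncomputable def frobNorm {m n : ℕ} (M : Matrix (Fin m) (Fin n) ℝ) : ℝ :=
  Real.sqrt (∑ i, ∑ j, (M i j) ^ 2)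

theorem exists_orthonormal_sum_smul_eq {𝕜 E ι : Type*} [RCLike 𝕜] [NormedAddCommGroup E]
    [InnerProductSpace 𝕜 E] [Fintype ι] (v : ι → E) :
    ∃ (k : ℕ) (u : Fin k → E) (c : ι → Fin k → 𝕜),
      k ≤ Fintype.card ι ∧ Orthonormal 𝕜 u ∧ ∀ j, ∑ i, c j i • u i = v j := by
  set V := Submodule.span 𝕜 (Set.range v)
  have hv : ∀ j, v j ∈ V := fun j => Submodule.subset_span ⟨j, rfl⟩
  have : FiniteDimensional 𝕜 V := .span_of_finite 𝕜 (Set.finite_range v)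
  let b := stdOrthonormalBasis 𝕜 V
  refine ⟨_, V.subtypeₗᵢ ∘ b, fun j => b.repr ⟨v j, hv j⟩, finrank_range_le_card v,
    b.orthonormal.comp_linearIsometry _, fun j => ?_⟩
  simpa using congrArg V.subtype (b.sum_repr ⟨v j, hv j⟩)

namespace Matrix

theorem exists_transpose_mul_self_eq_one_and_eq_mul {m n : Type*} [Fintype m] [Fintype n]
    (A : Matrix m n ℝ) :
    ∃ (k : ℕ) (U : Matrix m (Fin k) ℝ) (C : Matrix (Fin k) n ℝ),
      k ≤ Fintype.card n ∧ Uᵀ * U = 1 ∧ A = U * C := by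
  obtain ⟨k, u, c, hk, hu, hc⟩ :=
    exists_orthonormal_sum_smul_eq (𝕜 := ℝ) fun j => WithLp.toLp 2 (Aᵀ j)
  refine ⟨k, of fun i a => u a i, of fun a j => c j a, hk, ?_, ?_⟩
  · ext a b
    simpa [mul_apply, one_apply, EuclideanSpace.inner_eq_star_dotProduct, dotProduct, mul_comm]
      using orthonormal_iff_ite.mp hu a b
  · ext i j
    simpa [mul_apply, mul_comm] using (congrArg (· i) (hc j)).symm

theorem dotProduct_mulVec_self {m n R : Type*} [Fintype m] [Fintype n] [CommSemiring R]
    (M : Matrix m n R) (y : n → R) : M *ᵥ y ⬝ᵥ M *ᵥ y = y ⬝ᵥ (Mᵀ * M) *ᵥ y := by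
  rw [← mulVec_mulVec, dotProduct_mulVec y, vecMul_transpose]

end Matrix

section Frobenius

attribute [local instance] frobeniusNormedAddCommGroup

theorem Matrix.norm_toLp_mulVec_le {m n 𝕜 : Type*} [Fintype m] [Fintype n] [RCLike 𝕜]
    (M : Matrix m n 𝕜) (y : n → 𝕜) : ‖WithLp.toLp 2 (M *ᵥ y)‖ ≤ ‖M‖ * ‖WithLp.toLp 2 y‖ := by
  rw [← frobenius_norm_replicateCol (ι := Unit), ← frobenius_norm_replicateCol (ι := Unit),
    replicateCol_mulVec]
  exact frobenius_norm_mul M _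

theorem Matrix.abs_dotProduct_mulVec_le {n : Type*} [Fintype n] (M : Matrix n n ℝ) (y : n → ℝ) :
    |y ⬝ᵥ M *ᵥ y| ≤ ‖M‖ * (y ⬝ᵥ y) := by
  have hy : y ⬝ᵥ y = ‖WithLp.toLp 2 y‖ ^ 2 := by
    rw [← real_inner_self_eq_norm_sq, EuclideanSpace.inner_eq_star_dotProduct]
    simp
  calc |y ⬝ᵥ M *ᵥ y| = |inner ℝ (WithLp.toLp 2 (M *ᵥ y)) (WithLp.toLp 2 y)| := by
        simp [EuclideanSpace.inner_eq_star_dotProduct]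
    _ ≤ ‖WithLp.toLp 2 (M *ᵥ y)‖ * ‖WithLp.toLp 2 y‖ := abs_real_inner_le_norm _ _
    _ ≤ ‖M‖ * ‖WithLp.toLp 2 y‖ * ‖WithLp.toLp 2 y‖ := by gcongr; exact norm_toLp_mulVec_le M y
    _ = ‖M‖ * (y ⬝ᵥ y) := by rw [hy]; ring

theorem frobNorm_eq_norm {m n : ℕ} (M : Matrix (Fin m) (Fin n) ℝ) : frobNorm M = ‖M‖ := by
  simp [frobNorm, frobenius_norm_def, Real.sqrt_eq_rpow]

end Frobenius

theorem frobNorm_sq_eq_trace {m n : ℕ} (M : Matrix (Fin m) (Fin n) ℝ) :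
    frobNorm M ^ 2 = trace (Mᵀ * M) := by
  rw [frobNorm, Real.sq_sqrt (by positivity), Finset.sum_comm]
  simp [trace, mul_apply, sq]

theorem abs_dotProduct_mulVec_sub_le_frobNorm {r n k : ℕ} (S : Matrix (Fin r) (Fin n) ℝ)
    (U : Matrix (Fin n) (Fin k) ℝ) (hU : Uᵀ * U = 1) (y : Fin k → ℝ) :
    |(S * U) *ᵥ y ⬝ᵥ (S * U) *ᵥ y - U *ᵥ y ⬝ᵥ U *ᵥ y| ≤
      frobNorm (Uᵀ * Sᵀ * S * U - Uᵀ * U) * (U *ᵥ y ⬝ᵥ U *ᵥ y) := by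
  have hSU : (S * U)ᵀ * (S * U) = Uᵀ * Sᵀ * S * U := by
    rw [transpose_mul, Matrix.mul_assoc, Matrix.mul_assoc, Matrix.mul_assoc]
  rw [dotProduct_mulVec_self, dotProduct_mulVec_self, ← dotProduct_sub, ← sub_mulVec, hSU,
    frobNorm_eq_norm, hU, one_mulVec]
  exact abs_dotProduct_mulVec_le _ y

theorem sum_sq_mulVec_le_of_frobNorm_le {r n k l : ℕ} {ε : ℝ} (S : Matrix (Fin r) (Fin n) ℝ)
    (U : Matrix (Fin n) (Fin k) ℝ) (hU : Uᵀ * U = 1)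
    (hSU : frobNorm (Uᵀ * Sᵀ * S * U - Uᵀ * U) ≤ ε) (C : Matrix (Fin k) (Fin l) ℝ)
    (x : Fin l → ℝ) :
    (1 - ε) * (∑ i, ((U * C) *ᵥ x) i ^ 2) ≤ ∑ j, ((S * (U * C)) *ᵥ x) j ^ 2
      ∧ ∑ j, ((S * (U * C)) *ᵥ x) j ^ 2 ≤ (1 + ε) * (∑ i, ((U * C) *ᵥ x) i ^ 2) := by
  have hsq : ∀ {p : ℕ} (v : Fin p → ℝ), ∑ i, v i ^ 2 = v ⬝ᵥ v := fun v => by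
    simp [dotProduct, sq]
  rw [hsq, hsq, ← Matrix.mul_assoc, ← mulVec_mulVec, ← mulVec_mulVec]
  have hbound := (abs_dotProduct_mulVec_sub_le_frobNorm S U hU (C *ᵥ x)).trans
    (mul_le_mul_of_nonneg_right hSU (dotProduct_self_star_nonneg _))
  constructor <;> linarith [abs_le.mp hbound]

theorem ofReal_one_sub_le_measure_compl {Ω : Type*} [MeasurableSpace Ω] (P : Measure Ω)
    [IsProbabilityMeasure P] {s : Set Ω} {δ : ℝ} (hδ : 0 ≤ δ) (hs : P s ≤ ENNReal.ofReal δ) :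
    ENNReal.ofReal (1 - δ) ≤ P sᶜ := by
  rw [ENNReal.ofReal_sub _ hδ, ENNReal.ofReal_one, tsub_le_iff_right, ← measure_univ (μ := P)]
  calc P Set.univ ≤ P s + P sᶜ := measure_univ_le_add_compl s
    _ ≤ P sᶜ + ENNReal.ofReal δ := by rw [add_comm]; gcongr

theorem sketch_subspace_embedding_general
    {r n l : ℕ}
    (Ω : Type) [MeasurableSpace Ω] (P : Measure Ω) [IsProbabilityMeasure P]
    (S : Ω → Matrix (Fin r) (Fin n) ℝ)
    (ε δ : ℝ) (hε : 0 < ε) (hδ : 0 < δ)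
    (hsketch : ∀ (m₁ m₂ : ℕ) (A : Matrix (Fin n) (Fin m₁) ℝ) (B : Matrix (Fin n) (Fin m₂) ℝ),
      P {ω | frobNorm (Aᵀ * (S ω)ᵀ * S ω * B - Aᵀ * B) > (ε / l) * frobNorm A * frobNorm B}
        ≤ ENNReal.ofReal δ)
    (A : Matrix (Fin n) (Fin l) ℝ) :
    ENNReal.ofReal (1 - δ) ≤
      P {ω | ∀ x : Fin l → ℝ,
        (1 - ε) * (∑ i, (A.mulVec x i) ^ 2) ≤ ∑ j, ((S ω * A).mulVec x j) ^ 2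
        ∧ ∑ j, ((S ω * A).mulVec x j) ^ 2 ≤ (1 + ε) * (∑ i, (A.mulVec x i) ^ 2)} := by
  obtain ⟨k, U, C, hkl, hU, rfl⟩ := exists_transpose_mul_self_eq_one_and_eq_mul A
  rw [Fintype.card_fin] at hkl
  have hthreshold : (ε / l) * frobNorm U * frobNorm U ≤ ε := by
    rw [mul_assoc, ← sq, frobNorm_sq_eq_trace, hU, trace_one, Fintype.card_fin,
      div_mul_comm]
    exact mul_le_of_le_one_left hε.le (div_le_one_of_le₀ (by exact_mod_cast hkl) (by positivity))
  refine (ofReal_one_sub_le_measure_compl P hδ.le (hsketch k k U U)).trans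
    (measure_mono fun ω hω x => ?_)
  rw [Set.mem_compl_iff, Set.mem_ofPred_eq, not_lt] at hω
  exact sum_sq_mulVec_le_of_frobNorm_le (S ω) U hU (hω.trans hthreshold) C x

/-- Subspace embedding from the approximate-matrix-multiplication sketch property:
if `S` is an `(ε/l, δ)`-sketch matrix, then for any fixed `A ∈ ℝ^{n×l}`, with probability
at least `1 − δ`, simultaneously for all `x`, `(1−ε)‖Ax‖² ≤ ‖SAx‖² ≤ (1+ε)‖Ax‖²`. -/
theorem sketch_subspace_embedding
    {r n l : ℕ} (hl : 0 < l)
    (Ω : Type) [MeasurableSpace Ω] (P : Measure Ω) [IsProbabilityMeasure P]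
    (S : Ω → Matrix (Fin r) (Fin n) ℝ)
    (ε δ : ℝ) (hε : 0 < ε) (hδ : 0 < δ)
    (hsketch : ∀ (m₁ m₂ : ℕ) (A : Matrix (Fin n) (Fin m₁) ℝ) (B : Matrix (Fin n) (Fin m₂) ℝ),
      P {ω | frobNorm (Aᵀ * (S ω)ᵀ * S ω * B - Aᵀ * B) > (ε / l) * frobNorm A * frobNorm B}
        ≤ ENNReal.ofReal δ)
    (A : Matrix (Fin n) (Fin l) ℝ) :
    ENNReal.ofReal (1 - δ) ≤
      P {ω | ∀ x : Fin l → ℝ,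
        (1 - ε) * (∑ i, (A.mulVec x i) ^ 2) ≤ ∑ j, ((S ω * A).mulVec x j) ^ 2
        ∧ ∑ j, ((S ω * A).mulVec x j) ^ 2 ≤ (1 + ε) * (∑ i, (A.mulVec x i) ^ 2)} :=
  sketch_subspace_embedding_general Ω P S ε δ hε hδ hsketch A
end

section
/- Let S be a random r×n matrix constructed as follows: choose independent uniformly random h : [n] → [r] and random signs σ : [n] → {−1, +1}, and set S[h(i), i] = σ(i) with all other entries zero. If r > 18/(ε²δ) with ε, δ ∈ (0, 1/2), then for any fixed matrices A, B with n rows, Pr[‖AᵀSᵀSB − AᵀB‖ > ε‖A‖_F‖B‖_F] ≤ δ. -/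
/-!
Write `G = SᵀS - I`, so that `AᵀSᵀSB - AᵀB = AᵀGB`. Off the diagonal `G i i' = σᵢσᵢ'·[hᵢ = hᵢ']`
and on it `G i i = 0`. Flipping the single sign `σₘ` changes `G i i'` by `(±1)(±1)`, so
`E[G i i' · G j j'] = 0` unless `{i, i'} = {j, j'}`, while `E[G i i'²] = P(hᵢ = hᵢ') = 1/r`.
Hence every entry `Σ c i i' G i i'` of `AᵀGB` has second moment at most `(2/r) Σ c i i'²`, so
`E‖AᵀGB‖_F² ≤ (2/r)‖A‖_F²‖B‖_F²`, and Chebyshev's inequality gives the failure probability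
`2/(rε²) < δ`. Since `(h, σ)` is uniform on the finite set `(Fin r × Bool)ⁿ`, every expectation
is a finite sum.
-/

open MeasureTheory Matrix ProbabilityTheory

/-- Frobenius norm of a matrix. -/
noncomputable def frobNorm' {m n : ℕ} (M : Matrix (Fin m) (Fin n) ℝ) : ℝ :=
  Real.sqrt (∑ i, ∑ j, (M i j) ^ 2)

open Finset
open scoped ENNReal

def boolSign (b : Bool) : ℝ := if b then 1 else -1

lemma boolSign_mul_self (b : Bool) : boolSign b * boolSign b = 1 := by
  cases b <;> norm_num [boolSign]

section CountSketch

variable {ι β : Type*} [DecidableEq ι] [Fintype β] [DecidableEq β]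

def countSketch (x : ι → β × Bool) : Matrix β ι ℝ :=
  Matrix.of fun j i => if (x i).1 = j then boolSign (x i).2 else 0

noncomputable def sketchGramError (x : ι → β × Bool) : Matrix ι ι ℝ :=
  (countSketch x)ᵀ * countSketch x - 1

lemma sketchGramError_apply (x : ι → β × Bool) (i i' : ι) :
    sketchGramError x i i' =
      (if (x i).1 = (x i').1 then boolSign (x i).2 * boolSign (x i').2 else 0) -
        if i = i' then 1 else 0 := by
  simp [sketchGramError, countSketch, Matrix.mul_apply, Matrix.one_apply, ite_mul, eq_comm]

lemma sketchGramError_self (x : ι → β × Bool) (i : ι) : sketchGramError x i i = 0 := by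
  simp [sketchGramError_apply, boolSign_mul_self]

lemma sketchGramError_comm (x : ι → β × Bool) (i i' : ι) :
    sketchGramError x i i' = sketchGramError x i' i := by
  simp only [sketchGramError_apply, eq_comm, mul_comm]

lemma sketchGramError_sq (x : ι → β × Bool) {i i' : ι} (h : i ≠ i') :
    sketchGramError x i i' ^ 2 = if (x i).1 = (x i').1 then 1 else 0 := by
  rw [sketchGramError_apply, if_neg h, sub_zero]
  split_ifs
  · rw [mul_pow, sq, sq, boolSign_mul_self, boolSign_mul_self, one_mul]
  · simp

lemma sketchGramError_flipSign (m : ι) (x : ι → β × Bool) (i i' : ι) :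
    sketchGramError (Function.update x m ((x m).1, !(x m).2)) i i' =
      (if i = m then -1 else 1) * (if i' = m then -1 else 1) * sketchGramError x i i' := by
  rcases eq_or_ne i i' with rfl | h
  · simp [sketchGramError_self]
  have hsign : ∀ k, boolSign (Function.update x m ((x m).1, !(x m).2) k).2 =
      (if k = m then -1 else 1) * boolSign (x k).2 := by
    intro k
    by_cases hk : k = m
    · subst hk; cases (x k).2 <;> simp [boolSign]
    · simp [hk]
  have hfst : ∀ k, (Function.update x m ((x m).1, !(x m).2) k).1 = (x k).1 := by
    intro k; by_cases hk : k = m <;> simp [hk]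
  simp only [sketchGramError_apply, if_neg h, sub_zero, hsign, hfst]
  split_ifs <;> ring

lemma sum_sketchGramError_mul_eq_zero [Fintype ι] {i i' j j' : ι} (hi' : i ≠ i') (hj : i ≠ j)
    (hj' : i ≠ j') : ∑ x : ι → β × Bool, sketchGramError x i i' * sketchGramError x j j' = 0 := by
  -- `i` occurs once among the indices, so flipping `σᵢ` negates the summand.
  set flip : (ι → β × Bool) → ι → β × Bool := fun x => Function.update x i ((x i).1, !(x i).2)
  have hflip : Function.Involutive flip := fun x => by simp [flip]
  have hneg : ∀ x, sketchGramError (flip x) i i' * sketchGramError (flip x) j j' =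
      -(sketchGramError x i i' * sketchGramError x j j') := by
    intro x
    simp only [flip, sketchGramError_flipSign, if_true, if_neg hi'.symm, if_neg hj.symm,
      if_neg hj'.symm]
    ring
  have := hflip.bijective.sum_comp fun x => sketchGramError x i i' * sketchGramError x j j'
  simp only [hneg, sum_neg_distrib] at this
  linarith

end CountSketch

lemma Fintype.sum_apply_mul_apply {ι α R : Type*} [Fintype ι] [DecidableEq ι] [Fintype α]
    [Nonempty α] [Field R] [CharZero R] {i j : ι} (hij : i ≠ j) (f g : α → R) :
    ∑ x : ι → α, f (x i) * g (x j) =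
      Fintype.card (ι → α) * ((∑ a, f a) / Fintype.card α) * ((∑ a, g a) / Fintype.card α) := by
  have hprod : ∀ x : ι → α, f (x i) * g (x j) =
      ∏ m, (if m = i then f (x m) else 1) * (if m = j then g (x m) else 1) := by
    intro x; rw [prod_mul_distrib, prod_ite_eq', prod_ite_eq']
  have hsum : ∀ m, ∑ a, (if m = i then f a else 1) * (if m = j then g a else 1) =
      (if m = i then (∑ a, f a) / Fintype.card α else 1) *
        (if m = j then (∑ a, g a) / Fintype.card α else 1) * Fintype.card α := by
    intro m
    by_cases hi : m = i
    · subst hi; simp [hij]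
    · by_cases hj : m = j
      · subst hj; simp [hi]
      · simp [hi, hj]
  rw [Fintype.sum_congr _ _ hprod,
    ← Fintype.prod_sum fun m a => (if m = i then f a else 1) * (if m = j then g a else 1)]
  simp_rw [hsum, prod_mul_distrib, prod_ite_eq', prod_const]
  rw [card_univ, Fintype.card_fun, Nat.cast_pow]
  ring

section CountSketchMoments

variable {ι β : Type*} [Fintype ι] [DecidableEq ι] [Fintype β] [DecidableEq β] [Nonempty β]

lemma sum_sketchGramError_sq {i i' : ι} (h : i ≠ i') :
    ∑ x : ι → β × Bool, sketchGramError x i i' ^ 2 =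
      Fintype.card (ι → β × Bool) / Fintype.card β := by
  have hcollide : ∀ x : ι → β × Bool, sketchGramError x i i' ^ 2 =
      ∑ v, (if (x i).1 = v then 1 else 0) * (if (x i').1 = v then 1 else 0) := by
    intro x
    simp [sketchGramError_sq x h]
  have hbucket : ∀ v : β, ∑ a : β × Bool, (if a.1 = v then (1 : ℝ) else 0) = 2 := by
    intro v
    rw [Fintype.sum_prod_type]
    simp only [Fintype.sum_bool, sum_add_distrib, sum_ite_eq']
    norm_num
  rw [Fintype.sum_congr _ _ hcollide, Finset.sum_comm]
  rw [Fintype.sum_congr _ _ fun v => Fintype.sum_apply_mul_apply h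
    (fun a : β × Bool => if a.1 = v then (1 : ℝ) else 0) (fun a => if a.1 = v then 1 else 0)]
  simp only [hbucket, sum_const, card_univ, nsmul_eq_mul, Fintype.card_prod, Fintype.card_bool]
  push_cast
  field_simp

lemma sum_sketchGramError_mul (i i' j j' : ι) :
    ∑ x : ι → β × Bool, sketchGramError x i i' * sketchGramError x j j' =
      if i = i' then 0 else
        (Fintype.card (ι → β × Bool) : ℝ) / Fintype.card β *
          ((if j = i ∧ j' = i' then 1 else 0) + (if j = i' ∧ j' = i then 1 else 0)) := by
  rcases eq_or_ne i i' with rfl | hii'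
  · simp [sketchGramError_self]
  rw [if_neg hii']
  by_cases hsame : j = i ∧ j' = i'
  · obtain ⟨rfl, rfl⟩ := hsame
    simp [hii', ← sq, sum_sketchGramError_sq hii']
  by_cases hswap : j = i' ∧ j' = i
  · obtain ⟨rfl, rfl⟩ := hswap
    simp [hii', ← sq, sketchGramError_comm _ j' j, sum_sketchGramError_sq hii'.symm]
  rw [if_neg hsame, if_neg hswap, add_zero, mul_zero]
  have : (i ≠ j ∧ i ≠ j') ∨ (i' ≠ j ∧ i' ≠ j') := by grind
  rcases this with ⟨hj, hj'⟩ | ⟨hj, hj'⟩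
  · exact sum_sketchGramError_mul_eq_zero hii' hj hj'
  · rw [Fintype.sum_congr _ _ fun x => by rw [sketchGramError_comm x i i']]
    exact sum_sketchGramError_mul_eq_zero hii'.symm hj hj'

lemma sum_sq_sum_mul_sketchGramError_le (c : ι → ι → ℝ) :
    ∑ x : ι → β × Bool, (∑ i, ∑ i', c i i' * sketchGramError x i i') ^ 2 ≤
      2 * ((Fintype.card (ι → β × Bool) : ℝ) / Fintype.card β) * ∑ i, ∑ i', c i i' ^ 2 := by
  set D : ℝ := (Fintype.card (ι → β × Bool) : ℝ) / Fintype.card β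
  have hD : 0 ≤ D := by positivity
  have hexpand : ∑ x : ι → β × Bool, (∑ i, ∑ i', c i i' * sketchGramError x i i') ^ 2 =
      ∑ i, ∑ i', c i i' * ∑ j, ∑ j', c j j' *
        ∑ x : ι → β × Bool, sketchGramError x i i' * sketchGramError x j j' := by
    simp_rw [sq, sum_mul, mul_sum]
    rw [sum_comm]; refine sum_congr rfl fun i _ => ?_
    rw [sum_comm]; refine sum_congr rfl fun i' _ => ?_
    rw [sum_comm]; refine sum_congr rfl fun j _ => ?_
    rw [sum_comm]; refine sum_congr rfl fun j' _ => ?_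
    exact sum_congr rfl fun x _ => by ring
  have horth : ∀ i i', ∑ j, ∑ j', c j j' *
      ∑ x : ι → β × Bool, sketchGramError x i i' * sketchGramError x j j' =
        if i = i' then 0 else D * (c i i' + c i' i) := by
    intro i i'
    simp only [sum_sketchGramError_mul]
    split_ifs
    · simp
    · simp [mul_add, ite_and, sum_add_distrib, D]
      ring
  have hpoint : ∀ i i', c i i' * (if i = i' then 0 else D * (c i i' + c i' i)) ≤
      D * (3 / 2 * c i i' ^ 2 + 1 / 2 * c i' i ^ 2) := by
    intro i i'
    split_ifs
    · rw [mul_zero]; positivity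
    · nlinarith [mul_nonneg hD (sq_nonneg (c i i' - c i' i))]
  have htranspose : ∑ i, ∑ i', c i' i ^ 2 = ∑ i, ∑ i', c i i' ^ 2 := sum_comm
  calc _ = ∑ i, ∑ i', c i i' * (if i = i' then 0 else D * (c i i' + c i' i)) := by
        simp only [hexpand, horth]
    _ ≤ ∑ i, ∑ i', D * (3 / 2 * c i i' ^ 2 + 1 / 2 * c i' i ^ 2) :=
        sum_le_sum fun i _ => sum_le_sum fun i' _ => hpoint i i'
    _ = 2 * D * ∑ i, ∑ i', c i i' ^ 2 := by
        simp only [mul_add, sum_add_distrib, ← mul_sum, htranspose]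
        ring

end CountSketchMoments

lemma frobNorm'_nonneg {m n : ℕ} (M : Matrix (Fin m) (Fin n) ℝ) : 0 ≤ frobNorm' M :=
  Real.sqrt_nonneg _

lemma frobNorm'_sq {m n : ℕ} (M : Matrix (Fin m) (Fin n) ℝ) :
    frobNorm' M ^ 2 = ∑ i, ∑ j, M i j ^ 2 :=
  Real.sq_sqrt (by positivity)

lemma Matrix.transpose_mul_mul_apply {ι κ μ R : Type*} [Fintype ι] [CommSemiring R]
    (A : Matrix ι κ R) (M : Matrix ι ι R) (B : Matrix ι μ R) (k : κ) (l : μ) :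
    (Aᵀ * M * B) k l = ∑ i, ∑ i', A i k * B i' l * M i i' := by
  simp only [Matrix.mul_apply, transpose_apply, sum_mul]
  rw [sum_comm]
  exact sum_congr rfl fun i _ => sum_congr rfl fun i' _ => by ring

lemma sum_frobNorm'_sketchGramError_sq_le {n m₁ m₂ : ℕ} {β : Type*} [Fintype β] [DecidableEq β]
    [Nonempty β]
    (A : Matrix (Fin n) (Fin m₁) ℝ) (B : Matrix (Fin n) (Fin m₂) ℝ) :
    ∑ x : Fin n → β × Bool, frobNorm' (Aᵀ * sketchGramError x * B) ^ 2 ≤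
      2 * ((Fintype.card (Fin n → β × Bool) : ℝ) / Fintype.card β) *
        (frobNorm' A * frobNorm' B) ^ 2 := by
  have hAB : (frobNorm' A * frobNorm' B) ^ 2 = ∑ k, ∑ l, ∑ i, ∑ i', (A i k * B i' l) ^ 2 := by
    simp only [mul_pow, ← sum_mul_sum, frobNorm'_sq]
    rw [sum_comm (f := fun i k => A i k ^ 2), sum_comm (f := fun i l => B i l ^ 2)]
  simp only [frobNorm'_sq, Matrix.transpose_mul_mul_apply]
  rw [sum_comm]
  simp only [sum_comm (γ := Fin n → β × Bool)]
  rw [hAB, mul_sum]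
  refine sum_le_sum fun k _ => ?_
  rw [mul_sum]
  exact sum_le_sum fun l _ => sum_sq_sum_mul_sketchGramError_le _

lemma card_filter_lt_mul_sq_le {α : Type*} [Fintype α] (f : α → ℝ) {C a ε : ℝ} (hC : 0 ≤ C)
    (ha : 0 ≤ a) (hε : 0 < ε) (hf : ∑ x, f x ^ 2 ≤ C * a ^ 2) :
    #{x | ε * a < f x} * ε ^ 2 ≤ C := by
  classical
  rcases ha.eq_or_lt with rfl | ha
  · have hempty : ({x | ε * 0 < f x} : Finset α) = ∅ := by
      refine filter_false_of_mem fun x _ hx => ?_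
      have := single_le_sum (fun y _ => sq_nonneg (f y)) (mem_univ x)
      nlinarith
    rw [hempty, card_empty, Nat.cast_zero, zero_mul]
    exact hC
  · have hcheb : #{x | ε * a < f x} * (ε * a) ^ 2 ≤ ∑ x, f x ^ 2 :=
      calc #{x | ε * a < f x} * (ε * a) ^ 2
          ≤ ∑ x ∈ {x | ε * a < f x}, f x ^ 2 := by
            rw [← nsmul_eq_mul]
            exact card_nsmul_le_sum _ _ _ fun x hx =>
              pow_le_pow_left₀ (by positivity) (mem_filter.1 hx).2.le 2
        _ ≤ ∑ x, f x ^ 2 := sum_le_sum_of_subset_of_nonneg (subset_univ _) fun _ _ _ => sq_nonneg _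
    have : (#{x | ε * a < f x} * ε ^ 2) * a ^ 2 ≤ C * a ^ 2 := by nlinarith
    exact le_of_mul_le_mul_right this (by positivity)

lemma measure_preimage_eq_card_div_card {Ω ι α : Type*} [MeasurableSpace Ω] {P : Measure Ω}
    [Fintype ι] [DecidableEq ι] [Fintype α] [Nonempty α] [MeasurableSpace α]
    [MeasurableSingletonClass α]
    {X : Ω → ι → α} (hmeas : ∀ i, Measurable fun ω => X ω i)
    (hindep : iIndepFun (fun i ω => X ω i) P)
    (hunif : ∀ i, P.map (fun ω => X ω i) = (PMF.uniformOfFintype α).toMeasure)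
    (s : Finset (ι → α)) :
    P (X ⁻¹' s) = #s / Fintype.card (ι → α) := by
  have hpoint : ∀ x : ι → α, P (X ⁻¹' {x}) = (Fintype.card (ι → α) : ℝ≥0∞)⁻¹ := by
    intro x
    have hfiber : X ⁻¹' {x} = ⋂ i ∈ (univ : Finset ι), (fun ω => X ω i) ⁻¹' {x i} := by
      ext ω; simp [funext_iff]
    rw [hfiber, hindep.measure_inter_preimage_eq_mul _ fun i _ => measurableSet_singleton (x i)]
    simp_rw [← Measure.map_apply (hmeas _) (measurableSet_singleton _), hunif,
      PMF.toMeasure_apply_singleton _ _ (measurableSet_singleton _), PMF.uniformOfFintype_apply]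
    simp [ENNReal.inv_pow]
  rw [← sum_measure_preimage_singleton s fun x _ =>
    measurable_pi_lambda _ hmeas (measurableSet_singleton x)]
  simp [hpoint, div_eq_mul_inv]

lemma transpose_mul_countSketch_sub {ι β κ μ : Type*} [Fintype ι] [DecidableEq ι] [Fintype β]
    [DecidableEq β] (x : ι → β × Bool) (A : Matrix ι κ ℝ) (B : Matrix ι μ ℝ) :
    Aᵀ * (countSketch x)ᵀ * countSketch x * B - Aᵀ * B = Aᵀ * sketchGramError x * B := by
  simp only [sketchGramError, Matrix.mul_sub, Matrix.sub_mul, Matrix.mul_one, Matrix.mul_assoc]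

theorem sparse_embedding_approx_matrix_product_general
    {r n : ℕ} (hr0 : 0 < r)
    (Ω : Type) [MeasurableSpace Ω] (P : Measure Ω)
    (X : Ω → Fin n → Fin r × Bool)
    (hmeas : ∀ i, Measurable (fun ω => X ω i))
    (hindep : iIndepFun (fun i ω => X ω i) P)
    (hunif : ∀ i, P.map (fun ω => X ω i)
      = (@PMF.uniformOfFintype (Fin r × Bool) _ ⟨(⟨0, hr0⟩, true)⟩).toMeasure)
    (ε δ : ℝ) (hε : 0 < ε) (hδ : 0 < δ)
    (hrbig : (r : ℝ) > 18 / (ε ^ 2 * δ))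
    (S : Ω → Matrix (Fin r) (Fin n) ℝ)
    (hS : ∀ ω, S ω = Matrix.of fun j i =>
      if (X ω i).1 = j then (if (X ω i).2 then (1 : ℝ) else -1) else 0)
    (m₁ m₂ : ℕ) (A : Matrix (Fin n) (Fin m₁) ℝ) (B : Matrix (Fin n) (Fin m₂) ℝ) :
    P {ω | frobNorm' (Aᵀ * (S ω)ᵀ * S ω * B - Aᵀ * B) > ε * frobNorm' A * frobNorm' B}
      ≤ ENNReal.ofReal δ := by
  have : NeZero r := ⟨hr0.ne'⟩
  set F : (Fin n → Fin r × Bool) → ℝ := fun x => frobNorm' (Aᵀ * sketchGramError x * B)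
  have hevent : {ω | frobNorm' (Aᵀ * (S ω)ᵀ * S ω * B - Aᵀ * B) > ε * frobNorm' A * frobNorm' B}
      = X ⁻¹' ↑({x | ε * (frobNorm' A * frobNorm' B) < F x} : Finset _) := by
    ext ω
    have hSω : S ω = countSketch (X ω) := hS ω
    simp only [Set.mem_ofPred_eq, Set.mem_preimage, coe_filter, mem_univ, true_and, gt_iff_lt,
      hSω, transpose_mul_countSketch_sub, F, mul_assoc]
  have hcount := card_filter_lt_mul_sq_le F (by positivity)
    (mul_nonneg (frobNorm'_nonneg A) (frobNorm'_nonneg B)) hε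
    (sum_frobNorm'_sketchGramError_sq_le A B)
  rw [hevent, measure_preimage_eq_card_div_card hmeas hindep hunif]
  set s : Finset (Fin n → Fin r × Bool) := {x | ε * (frobNorm' A * frobNorm' B) < F x}
  set N := Fintype.card (Fin n → Fin r × Bool)
  have hr : (0 : ℝ) < r := by exact_mod_cast hr0
  have h18 : 18 < r * (ε ^ 2 * δ) := (div_lt_iff₀ (by positivity)).1 hrbig
  have hcard : (#s : ℝ) ≤ δ * N := by
    rw [Fintype.card_fin, ← mul_div_assoc, le_div_iff₀ hr] at hcount
    nlinarith [mul_le_mul_of_nonneg_right hcount hδ.le,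
      mul_le_mul_of_nonneg_left h18.le (#s).cast_nonneg]
  refine ENNReal.div_le_of_le_mul ?_
  rw [← ENNReal.ofReal_natCast, ← ENNReal.ofReal_natCast, ← ENNReal.ofReal_mul hδ.le]
  exact ENNReal.ofReal_le_ofReal hcard

/-- Approximate matrix product guarantee for sparse embedding (CountSketch) matrices:
with `(hᵢ, σᵢ)` i.i.d. uniform on `Fin r × {±1}`, the matrix `S` with `S[h(i), i] = σ(i)`
and zeros elsewhere satisfies, for `r > 18/(ε²δ)` and any fixed `A, B` with `n` rows,
`Pr[‖AᵀSᵀSB − AᵀB‖_F > ε‖A‖_F‖B‖_F] ≤ δ`. -/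
theorem sparse_embedding_approx_matrix_product
    {r n : ℕ} (hr0 : 0 < r)
    (Ω : Type) [MeasurableSpace Ω] (P : Measure Ω) [IsProbabilityMeasure P]
    (X : Ω → Fin n → Fin r × Bool)
    (hmeas : ∀ i, Measurable (fun ω => X ω i))
    (hindep : iIndepFun (fun i ω => X ω i) P)
    (hunif : ∀ i, P.map (fun ω => X ω i)
      = (@PMF.uniformOfFintype (Fin r × Bool) _ ⟨(⟨0, hr0⟩, true)⟩).toMeasure)
    (ε δ : ℝ) (hε : 0 < ε) (hε' : ε < 1 / 2) (hδ : 0 < δ) (hδ' : δ < 1 / 2)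
    (hrbig : (r : ℝ) > 18 / (ε ^ 2 * δ))
    (S : Ω → Matrix (Fin r) (Fin n) ℝ)
    (hS : ∀ ω, S ω = Matrix.of fun j i =>
      if (X ω i).1 = j then (if (X ω i).2 then (1 : ℝ) else -1) else 0)
    (m₁ m₂ : ℕ) (A : Matrix (Fin n) (Fin m₁) ℝ) (B : Matrix (Fin n) (Fin m₂) ℝ) :
    P {ω | frobNorm' (Aᵀ * (S ω)ᵀ * S ω * B - Aᵀ * B) > ε * frobNorm' A * frobNorm' B}
      ≤ ENNReal.ofReal δ :=
  sparse_embedding_approx_matrix_product_general hr0 Ω P X hmeas hindep hunif ε δ hε hδ hrbig S hS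
    m₁ m₂ A B
end

section
/- Let a > (2−τ)/τ · (√(2/(2−τ)) + 1) for τ ∈ (0,1), and define step sizes α_i = 8/(μ(i+a)). Suppose a nonnegative sequence satisfies E_{i+1} ≤ (1−τ)(1+γ)E_i + (1−τ)(1+1/γ)α_i² G² with γ = τ/(2(1−τ)) and E_0 = 0. Then for all i, E_i ≤ ((1−τ)(2−τ)(1+1/a)² α_i² G²) / (τ(1 − (1−τ/2)(1+1/a)²)). -/
/-!
With `γ = τ/(2(1 − τ))` the recursion reads `Eᵢ₊₁ ≤ (1 − τ/2)Eᵢ + bαᵢ²G²`, where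
`b = (1 − τ)(2 − τ)/τ`.  Since `αᵢ² ≤ (1 + 1/a)²αᵢ₊₁²`, the guess `Eᵢ ≤ Cαᵢ²G²` propagates
as soon as `((1 − τ/2)C + b)(1 + 1/a)² ≤ C`, and the constant of the statement is the fixed
point of this map; it is positive because the choice of `a` makes `(1 − τ/2)(1 + 1/a)² < 1`.
-/

theorem le_mul_of_le_mul_add_mul {E x : ℕ → ℝ} {q b r C : ℝ} (hq : 0 ≤ q)
    (hx : ∀ n, 0 ≤ x n) (hxr : ∀ n, x n ≤ r * x (n + 1))
    (hqCb : 0 ≤ q * C + b) (hC : (q * C + b) * r ≤ C)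
    (hE0 : E 0 ≤ C * x 0) (hrec : ∀ n, E (n + 1) ≤ q * E n + b * x n) :
    ∀ n, E n ≤ C * x n := by
  intro n
  induction n with
  | zero => exact hE0
  | succ n ih =>
    calc E (n + 1) ≤ q * E n + b * x n := hrec n
      _ ≤ q * (C * x n) + b * x n := by gcongr
      _ = (q * C + b) * x n := by ring
      _ ≤ (q * C + b) * (r * x (n + 1)) := by gcongr; exact hxr n
      _ = (q * C + b) * r * x (n + 1) := by ring
      _ ≤ C * x (n + 1) := by gcongr; exact hx _

theorem le_fixedPoint_mul_of_le_mul_add_mul {E x : ℕ → ℝ} {q b r : ℝ} (hq : 0 ≤ q)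
    (hb : 0 ≤ b) (hr : 0 ≤ r) (hqr : q * r < 1)
    (hx : ∀ n, 0 ≤ x n) (hxr : ∀ n, x n ≤ r * x (n + 1))
    (hE0 : E 0 = 0) (hrec : ∀ n, E (n + 1) ≤ q * E n + b * x n) :
    ∀ n, E n ≤ b * r / (1 - q * r) * x n := by
  have hden : 0 < 1 - q * r := sub_pos.mpr hqr
  have hCpos : 0 ≤ b * r / (1 - q * r) := by positivity
  refine le_mul_of_le_mul_add_mul hq hx hxr (by positivity) (le_of_eq ?_) ?_ hrec
  · field_simp
    ring
  · rw [hE0]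
    exact mul_nonneg hCpos (hx 0)

theorem sq_div_le_sq_one_add_inv_mul_sq_div_add_one {a t : ℝ} (ha : 0 < a) (hat : a ≤ t)
    (y : ℝ) : (y / t) ^ 2 ≤ (1 + 1 / a) ^ 2 * (y / (t + 1)) ^ 2 := by
  have ht : 0 < t := ha.trans_le hat
  have hsplit : y / t = (1 + 1 / t) * (y / (t + 1)) := by
    field_simp
  rw [hsplit, mul_pow]
  gcongr

theorem threshold_pos {τ : ℝ} (hτ0 : 0 < τ) (hτ1 : τ < 1) :
    0 < (2 - τ) / τ * (Real.sqrt (2 / (2 - τ)) + 1) := by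
  have h2τ : 0 < 2 - τ := by linarith
  positivity

/-- The threshold on `a` is `1/(s − 1)` for `s = √(2/(2−τ))`, because `(s + 1)(s − 1) = τ/(2−τ)`. -/
theorem one_add_inv_lt_sqrt {τ a : ℝ} (hτ0 : 0 < τ) (hτ1 : τ < 1)
    (ha : a > (2 - τ) / τ * (Real.sqrt (2 / (2 - τ)) + 1)) :
    1 + 1 / a < Real.sqrt (2 / (2 - τ)) := by
  set s := Real.sqrt (2 / (2 - τ))
  have h2τ : 0 < 2 - τ := by linarith
  have hs2 : s ^ 2 = 2 / (2 - τ) := Real.sq_sqrt (by positivity)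
  have hs1 : 1 < s := by
    rw [Real.lt_sqrt zero_le_one, one_pow, lt_div_iff₀ h2τ]
    linarith
  have hthreshold : (2 - τ) / τ * (s + 1) * (s - 1) = 1 := by
    rw [mul_assoc, show (s + 1) * (s - 1) = s ^ 2 - 1 by ring, hs2]
    field_simp
    ring
  have ha0 : 0 < a := (threshold_pos hτ0 hτ1).trans ha
  have hkey : 1 < a * (s - 1) :=
    calc (1 : ℝ) = (2 - τ) / τ * (s + 1) * (s - 1) := hthreshold.symm
      _ < a * (s - 1) := mul_lt_mul_of_pos_right ha (sub_pos.mpr hs1)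
  have hinv : 1 / a < s - 1 := by
    rw [div_lt_iff₀ ha0, mul_comm]
    exact hkey
  linarith

theorem one_sub_half_mul_one_add_inv_sq_lt_one {τ a : ℝ} (hτ0 : 0 < τ) (hτ1 : τ < 1)
    (ha : a > (2 - τ) / τ * (Real.sqrt (2 / (2 - τ)) + 1)) :
    (1 - τ / 2) * (1 + 1 / a) ^ 2 < 1 := by
  have h2τ : 0 < 2 - τ := by linarith
  have ha0 : 0 < a := (threshold_pos hτ0 hτ1).trans ha
  have hsq : (1 + 1 / a) ^ 2 < 2 / (2 - τ) := by
    rw [← Real.sq_sqrt (by positivity : (0 : ℝ) ≤ 2 / (2 - τ))]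
    gcongr
    exact one_add_inv_lt_sqrt hτ0 hτ1 ha
  calc (1 - τ / 2) * (1 + 1 / a) ^ 2 < (1 - τ / 2) * (2 / (2 - τ)) := by
        gcongr
        linarith
    _ = 1 := by field_simp

theorem error_feedback_error_sequence_bound_general
    (τ μ G a : ℝ) (hτ0 : 0 < τ) (hτ1 : τ < 1)
    (ha : a > (2 - τ) / τ * (Real.sqrt (2 / (2 - τ)) + 1))
    (α : ℕ → ℝ) (hα : ∀ i, α i = 8 / (μ * (i + a)))
    (γ : ℝ) (hγ : γ = τ / (2 * (1 - τ)))
    (E : ℕ → ℝ) (hE0 : E 0 = 0)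
    (hrec : ∀ i, E (i + 1) ≤ (1 - τ) * (1 + γ) * E i
        + (1 - τ) * (1 + 1 / γ) * (α i) ^ 2 * G ^ 2) :
    ∀ i, E i ≤ (1 - τ) * (2 - τ) * (1 + 1 / a) ^ 2 * (α i) ^ 2 * G ^ 2
        / (τ * (1 - (1 - τ / 2) * (1 + 1 / a) ^ 2)) := by
  have h1τ : 0 < 1 - τ := by linarith
  have h2τ : 0 < 2 - τ := by linarith
  have ha0 : 0 < a := (threshold_pos hτ0 hτ1).trans ha
  have hq : (1 - τ) * (1 + γ) = 1 - τ / 2 := by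
    rw [hγ]; field_simp; ring
  have hb : (1 - τ) * (1 + 1 / γ) = (1 - τ) * (2 - τ) / τ := by
    rw [hγ]; field_simp; ring
  have hstep : ∀ i, (α i) ^ 2 * G ^ 2 ≤ (1 + 1 / a) ^ 2 * ((α (i + 1)) ^ 2 * G ^ 2) := by
    intro i
    rw [hα, hα, div_mul_eq_div_div, div_mul_eq_div_div, ← mul_assoc, Nat.cast_succ, add_right_comm]
    gcongr
    exact sq_div_le_sq_one_add_inv_mul_sq_div_add_one ha0 (by simp) _
  have hbound := le_fixedPoint_mul_of_le_mul_add_mul (x := fun i => α i ^ 2 * G ^ 2)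
    (b := (1 - τ) * (2 - τ) / τ)
    (by linarith) (by positivity)
    (by positivity) (one_sub_half_mul_one_add_inv_sq_lt_one hτ0 hτ1 ha) (fun _ => by positivity)
    hstep hE0 (fun i => by simpa only [hq, hb, mul_assoc] using hrec i)
  intro i
  convert hbound i using 1
  field_simp

/-- Induction bound on the compression error sequence in error-feedback SGD with step
sizes `αᵢ = 8/(μ(i+a))`: if `E₀ = 0` and
`E_{i+1} ≤ (1−τ)(1+γ)Eᵢ + (1−τ)(1+1/γ)αᵢ²G²` with `γ = τ/(2(1−τ))`, then for all `i`,
`Eᵢ ≤ (1−τ)(2−τ)(1+1/a)²αᵢ²G² / (τ(1 − (1−τ/2)(1+1/a)²))`. -/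
theorem error_feedback_error_sequence_bound
    (τ μ G a : ℝ) (hτ0 : 0 < τ) (hτ1 : τ < 1) (hμ : 0 < μ)
    (ha : a > (2 - τ) / τ * (Real.sqrt (2 / (2 - τ)) + 1))
    (α : ℕ → ℝ) (hα : ∀ i, α i = 8 / (μ * (i + a)))
    (γ : ℝ) (hγ : γ = τ / (2 * (1 - τ)))
    (E : ℕ → ℝ) (hE0 : E 0 = 0) (hEnn : ∀ i, 0 ≤ E i)
    (hrec : ∀ i, E (i + 1) ≤ (1 - τ) * (1 + γ) * E i
        + (1 - τ) * (1 + 1 / γ) * (α i) ^ 2 * G ^ 2) :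
    ∀ i, E i ≤ (1 - τ) * (2 - τ) * (1 + 1 / a) ^ 2 * (α i) ^ 2 * G ^ 2
        / (τ * (1 - (1 - τ / 2) * (1 + 1 / a) ^ 2)) :=
  error_feedback_error_sequence_bound_general τ μ G a hτ0 hτ1 ha α hα γ hγ E hE0 hrec
end
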